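/- arXiv:1701.04045 — 5 statements merged into one kernel-verified Lean document; each statement's English description precedes it below -/
import Mathlib

section
/- Let A = (Q, Σ, Δ, q0, F) be an NFA, q ∈ Q a state, and s ∈ Σ* a string. If there exist two distinct runs of A from q to q both labeled by s, then for every natural number k the number of distinct runs of A from q to q labeled by s^k is at least 2^k. -/
/-- A nondeterministic finite automaton `A = (Q, Σ, Δ, q0, F)` with state type `Q`,
alphabet `A`, transition function `δ`, initial state `q0` and accepting states `F`. -/
structure NFA' (Q A : Type*) where
  δ : Q → A → Set Q
  q0 : Q
  F : Set Q

namespace NFA'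

variable {Q A : Type*}

/-- `ρ` is a run of the automaton labeled by the word `w`: the state sequence
`ρ 0, ρ 1, …, ρ |w|` follows transitions of `M` along the letters of `w`. -/
def IsRunOn (M : NFA' Q A) (w : List A) (ρ : Fin (w.length + 1) → Q) : Prop :=
  ∀ i : Fin w.length, ρ i.succ ∈ M.δ (ρ i.castSucc) (w.get i)

/-- The set of runs of `M` from `p` to `r` labeled by the word `w`,
represented by their state sequences. -/
def Runs (M : NFA' Q A) (p r : Q) (w : List A) : Set (Fin (w.length + 1) → Q) :=
  {ρ | ρ 0 = p ∧ ρ (Fin.last w.length) = r ∧ M.IsRunOn w ρ}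

end NFA'

/-- `wordPow s k` is the `k`-fold concatenation `s^k` of the word `s`. -/
def wordPow {A : Type*} (s : List A) : ℕ → List A
  | 0 => []
  | k + 1 => s ++ wordPow s k

/-!
Runs compose: a run `p → q` on `u` and a run `q → r` on `w` glue at `q` to a run `p → r` on
`u ++ w`, from which both pieces can be read back. So run counts are supermultiplicative, there
are at least `(#loops at q on s) ^ k` loops at `q` on `s^k`, and two distinct loops on `s` make
this at least `2 ^ k`.
-/

namespace NFA'

variable {Q A : Type*}

def runAppend (u w : List A) (ρ : Fin (u.length + 1) → Q) (σ : Fin (w.length + 1) → Q) :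
    Fin ((u ++ w).length + 1) → Q := fun i =>
  if h : (i : ℕ) ≤ u.length then ρ ⟨i, by omega⟩
  else σ ⟨i - u.length, by have := i.isLt; simp only [List.length_append] at this; omega⟩

section runAppend

variable {u w : List A} {ρ : Fin (u.length + 1) → Q} {σ : Fin (w.length + 1) → Q}

theorem runAppend_of_le {i : Fin ((u ++ w).length + 1)} (h : (i : ℕ) ≤ u.length) :
    runAppend u w ρ σ i = ρ ⟨i, by omega⟩ :=
  dif_pos h

theorem runAppend_of_ge (hglue : ρ (Fin.last _) = σ 0) {i : Fin ((u ++ w).length + 1)}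
    (h : u.length ≤ (i : ℕ)) :
    runAppend u w ρ σ i =
      σ ⟨i - u.length, by have := i.isLt; simp only [List.length_append] at this; omega⟩ := by
  unfold runAppend
  split_ifs with h'
  · convert hglue using 2 <;> ext <;> simp <;> omega
  · rfl

theorem runAppend_left (i : Fin (u.length + 1)) :
    runAppend u w ρ σ ⟨i, by simp only [List.length_append]; omega⟩ = ρ i :=
  runAppend_of_le (Nat.le_of_lt_succ i.isLt)

theorem runAppend_right (hglue : ρ (Fin.last _) = σ 0) (j : Fin (w.length + 1)) :
    runAppend u w ρ σ ⟨u.length + j, by simp only [List.length_append]; omega⟩ = σ j := by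
  rw [runAppend_of_ge hglue (Nat.le_add_right _ _)]
  simp

end runAppend

theorem runAppend_mem_runs {M : NFA' Q A} {p q r : Q} {u w : List A}
    {ρ : Fin (u.length + 1) → Q} {σ : Fin (w.length + 1) → Q}
    (hρ : ρ ∈ M.Runs p q u) (hσ : σ ∈ M.Runs q r w) :
    runAppend u w ρ σ ∈ M.Runs p r (u ++ w) := by
  obtain ⟨hρ0, hρl, hρ⟩ := hρ
  obtain ⟨hσ0, hσl, hσ⟩ := hσ
  have hglue : ρ (Fin.last _) = σ 0 := hρl.trans hσ0.symm
  refine ⟨?_, ?_, fun j => ?_⟩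
  · rw [runAppend_of_le (Nat.zero_le _)]
    exact hρ0
  · rw [runAppend_of_ge hglue (by simp)]
    convert hσl using 2
    ext
    simp
  · by_cases hj : (j : ℕ) < u.length
    · rw [runAppend_of_le (by rw [Fin.val_castSucc]; omega),
        runAppend_of_le (by rw [Fin.val_succ]; omega)]
      convert hρ ⟨j, hj⟩ using 2 <;> first | rfl | simp [List.getElem_append_left hj]
    · have hj' : (j : ℕ) - u.length < w.length := by
        have := j.isLt; simp only [List.length_append] at this; omega
      rw [runAppend_of_ge hglue (by rw [Fin.val_castSucc]; omega),
        runAppend_of_ge hglue (by rw [Fin.val_succ]; omega)]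
      convert hσ ⟨j - u.length, hj'⟩ using 2 <;>
        first | (ext; simp; omega) | simp [List.getElem_append_right (Nat.le_of_not_lt hj)]

theorem runAppend_injOn (M : NFA' Q A) (p q r : Q) (u w : List A) :
    Set.InjOn (fun x => runAppend u w x.1 x.2) (M.Runs p q u ×ˢ M.Runs q r w) := by
  rintro ⟨ρ, σ⟩ ⟨⟨-, hρl, -⟩, hσ0, -⟩ ⟨ρ', σ'⟩ ⟨⟨-, hρl', -⟩, hσ0', -⟩ heq
  refine Prod.ext (funext fun i => ?_) (funext fun j => ?_)
  · exact (runAppend_left i).symm.trans ((congrFun heq _).trans (runAppend_left i))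
  · exact (runAppend_right (hρl.trans hσ0.symm) j).symm.trans
      ((congrFun heq _).trans (runAppend_right (hρl'.trans hσ0'.symm) j))

theorem encard_runs_mul_le (M : NFA' Q A) (p q r : Q) (u w : List A) :
    (M.Runs p q u).encard * (M.Runs q r w).encard ≤ (M.Runs p r (u ++ w)).encard := by
  rw [← Set.encard_prod, ← (M.runAppend_injOn p q r u w).encard_image]
  refine Set.encard_le_encard (Set.image_subset_iff.2 fun x hx => ?_)
  exact runAppend_mem_runs hx.1 hx.2

theorem encard_runs_pow_le (M : NFA' Q A) (q : Q) (s : List A) (k : ℕ) :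
    (M.Runs q q s).encard ^ k ≤ (M.Runs q q (wordPow s k)).encard := by
  induction k with
  | zero =>
    rw [pow_zero, Set.one_le_encard_iff_nonempty]
    exact ⟨fun _ => q, rfl, rfl, fun i => i.elim0⟩
  | succ k ih =>
    calc (M.Runs q q s).encard ^ (k + 1)
        = (M.Runs q q s).encard * (M.Runs q q s).encard ^ k := pow_succ' _ _
      _ ≤ (M.Runs q q s).encard * (M.Runs q q (wordPow s k)).encard := mul_le_mul_right ih _
      _ ≤ (M.Runs q q (wordPow s (k + 1))).encard := M.encard_runs_mul_le q q q s _

end NFA'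

/-- If there are two distinct runs of `M` from `q` to `q` both labeled by `s`, then
for every `k` the number of distinct runs from `q` to `q` labeled by `s^k` is at least `2^k`. -/
theorem two_loops_exponential_runs {Q A : Type*} (M : NFA' Q A) (q : Q) (s : List A)
    (h : ∃ ρ₁ ρ₂, ρ₁ ∈ M.Runs q q s ∧ ρ₂ ∈ M.Runs q q s ∧ ρ₁ ≠ ρ₂) :
    ∀ k : ℕ, (2 ^ k : ℕ∞) ≤ (M.Runs q q (wordPow s k)).encard := by
  have two_le : 2 ≤ (M.Runs q q s).encard :=
    Order.add_one_le_of_lt (Set.one_lt_encard_iff.mpr h)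
  exact fun k => (pow_le_pow_left' two_le k).trans (M.encard_runs_pow_le q s k)
end

section
/- Let A = (Q, Σ, Δ, q0, F) be an NFA, q, q' ∈ Q states, and s ∈ Σ* a string. Suppose there exist a run π1 of A from q to q labeled by s, a run π2 of A from q to q' labeled by s with π1 ≠ π2, and a run π3 of A from q' to q' labeled by s. Then for every natural number k ≥ 1, the number of distinct runs of A from q to q' labeled by s^k is at least k. -/
/-!
Prefixing the runs from `q` to `q'` on `s^k` with `π₁` gives runs on `s^(k+1)`, injectively.
Iterating `π₃` gives a loop at `q'` on `s^k`; prefixed with `π₂` it is one more run on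
`s^(k+1)`, outside the first family because `π₁ ≠ π₂`. So each power of `s` adds a run.
-/

namespace NFA'

variable {Q A : Type*} {M : NFA' Q A} {w₁ w₂ : List A}

/-- The junction point is read from `ρ₂`: so `glue ρ₁` is injective, while `glue ρ₁ ρ₂`
extends `ρ₁` only when `ρ₁` ends where `ρ₂` starts. -/
def glue (ρ₁ : Fin (w₁.length + 1) → Q) (ρ₂ : Fin (w₂.length + 1) → Q) :
    Fin ((w₁ ++ w₂).length + 1) → Q := fun t =>
  if h : (t : ℕ) < w₁.length then ρ₁ ⟨t, by omega⟩
  else ρ₂ ⟨t - w₁.length, by have := t.isLt; simp only [List.length_append] at this; omega⟩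

lemma glue_natAdd (ρ₁ : Fin (w₁.length + 1) → Q) (ρ₂ : Fin (w₂.length + 1) → Q)
    (t : Fin (w₂.length + 1)) :
    glue ρ₁ ρ₂ (Fin.cast (by simp [Nat.add_assoc]) (Fin.natAdd w₁.length t)) = ρ₂ t := by
  simp [glue]

lemma glue_castLE {ρ₁ : Fin (w₁.length + 1) → Q} {ρ₂ : Fin (w₂.length + 1) → Q}
    (hjoin : ρ₁ (Fin.last _) = ρ₂ 0) (t : Fin (w₁.length + 1)) :
    glue ρ₁ ρ₂ (Fin.castLE (by simp) t) = ρ₁ t := by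
  by_cases ht : (t : ℕ) < w₁.length
  · simp [glue, ht]
  · have hlast : t = Fin.last _ := Fin.ext (by rw [Fin.val_last]; omega)
    subst hlast
    simp [glue, hjoin]

lemma glue_injective (ρ₁ : Fin (w₁.length + 1) → Q) :
    Function.Injective (glue ρ₁ : (Fin (w₂.length + 1) → Q) → _) := fun ρ₂ ρ₂' h =>
  funext fun t => by rw [← glue_natAdd ρ₁ ρ₂ t, ← glue_natAdd ρ₁ ρ₂' t, h]

lemma glue_ne_glue {ρ₁ ρ₁' : Fin (w₁.length + 1) → Q} {ρ₂ ρ₂' : Fin (w₂.length + 1) → Q}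
    (hne : ρ₁ ≠ ρ₁') (hjoin : ρ₁ (Fin.last _) = ρ₂ 0) (hjoin' : ρ₁' (Fin.last _) = ρ₂' 0) :
    glue ρ₁ ρ₂ ≠ glue ρ₁' ρ₂' := fun h =>
  hne <| funext fun t => by rw [← glue_castLE hjoin t, ← glue_castLE hjoin' t, h]

lemma glue_mem_runs {p m r : Q} {ρ₁ : Fin (w₁.length + 1) → Q} {ρ₂ : Fin (w₂.length + 1) → Q}
    (h₁ : ρ₁ ∈ M.Runs p m w₁) (h₂ : ρ₂ ∈ M.Runs m r w₂) :
    glue ρ₁ ρ₂ ∈ M.Runs p r (w₁ ++ w₂) := by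
  obtain ⟨hp, hm, hrun₁⟩ := h₁
  obtain ⟨hm', hr, hrun₂⟩ := h₂
  have hjoin : ρ₁ (Fin.last _) = ρ₂ 0 := hm.trans hm'.symm
  refine ⟨?_, ?_, fun i => ?_⟩
  · simpa using glue_castLE hjoin 0 |>.trans hp
  · convert glue_natAdd ρ₁ ρ₂ (Fin.last _) |>.trans hr using 2
    ext
    simp
  · by_cases hi : (i : ℕ) < w₁.length
    · have e₀ : i.castSucc = Fin.castLE (by simp) (Fin.castSucc ⟨i, hi⟩) := rfl
      have e₁ : i.succ = Fin.castLE (by simp) (Fin.succ ⟨i, hi⟩) := rfl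
      rw [e₀, e₁, glue_castLE hjoin, glue_castLE hjoin, List.get_eq_getElem,
        List.getElem_append_left hi]
      exact hrun₁ ⟨i, hi⟩
    · have hj : (i : ℕ) - w₁.length < w₂.length := by
        have := i.isLt; simp only [List.length_append] at this; omega
      have e₀ : i.castSucc = Fin.cast (by simp [Nat.add_assoc])
          (Fin.natAdd w₁.length (Fin.castSucc ⟨i - w₁.length, hj⟩)) :=
        Fin.ext (by simp only [Fin.castSucc_mk, Fin.natAdd_mk, Fin.cast_mk, Fin.val_castSucc]; omega)
      have e₁ : i.succ = Fin.cast (by simp [Nat.add_assoc])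
          (Fin.natAdd w₁.length (Fin.succ ⟨i - w₁.length, hj⟩)) :=
        Fin.ext (by simp only [Fin.succ_mk, Fin.natAdd_mk, Fin.cast_mk, Fin.val_succ]; omega)
      rw [e₀, e₁, glue_natAdd, glue_natAdd, List.get_eq_getElem,
        List.getElem_append_right (by omega)]
      exact hrun₂ ⟨i - w₁.length, hj⟩

lemma const_mem_runs_nil (p : Q) : (fun _ => p) ∈ M.Runs p p [] :=
  ⟨rfl, rfl, fun i => i.elim0⟩

lemma runs_wordPow_nonempty {p : Q} {s : List A} {π : Fin (s.length + 1) → Q}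
    (hπ : π ∈ M.Runs p p s) (k : ℕ) : (M.Runs p p (wordPow s k)).Nonempty := by
  induction k with
  | zero => exact ⟨_, const_mem_runs_nil p⟩
  | succ k ih =>
    obtain ⟨σ, hσ⟩ := ih
    exact ⟨_, glue_mem_runs hπ hσ⟩

lemma encard_runs_add_one_le {p m m' r : Q} {π₁ π₂ : Fin (w₁.length + 1) → Q}
    {σ : Fin (w₂.length + 1) → Q} (h₁ : π₁ ∈ M.Runs p m w₁) (h₂ : π₂ ∈ M.Runs p m' w₁)
    (hne : π₁ ≠ π₂) (hσ : σ ∈ M.Runs m' r w₂) :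
    (M.Runs m r w₂).encard + 1 ≤ (M.Runs p r (w₁ ++ w₂)).encard := by
  have hnotMem : glue π₂ σ ∉ glue π₁ '' M.Runs m r w₂ := by
    rintro ⟨ρ, hρ, heq⟩
    exact glue_ne_glue hne (h₁.2.1.trans hρ.1.symm) (h₂.2.1.trans hσ.1.symm) heq
  have hsub : insert (glue π₂ σ) (glue π₁ '' M.Runs m r w₂) ⊆ M.Runs p r (w₁ ++ w₂) := by
    rintro _ (rfl | ⟨ρ, hρ, rfl⟩)
    exacts [glue_mem_runs h₂ hσ, glue_mem_runs h₁ hρ]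
  calc (M.Runs m r w₂).encard + 1 = (glue π₁ '' M.Runs m r w₂).encard + 1 := by
        rw [(glue_injective π₁).encard_image]
    _ = (insert (glue π₂ σ) (glue π₁ '' M.Runs m r w₂)).encard :=
        (Set.encard_insert_of_notMem hnotMem).symm
    _ ≤ _ := Set.encard_mono hsub

end NFA'

/-- If there are a run `π₁` from `q` to `q` labeled `s`, a run `π₂` from `q` to `q'`
labeled `s` with `π₁ ≠ π₂`, and a run `π₃` from `q'` to `q'` labeled `s`, then for every
`k ≥ 1` the number of distinct runs from `q` to `q'` labeled by `s^k` is at least `k`. -/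
theorem two_state_loops_linear_runs {Q A : Type*} (M : NFA' Q A) (q q' : Q) (s : List A)
    (h : ∃ π₁ π₂ π₃, π₁ ∈ M.Runs q q s ∧ π₂ ∈ M.Runs q q' s ∧ π₁ ≠ π₂ ∧
      π₃ ∈ M.Runs q' q' s) :
    ∀ k : ℕ, 1 ≤ k → (k : ℕ∞) ≤ (M.Runs q q' (wordPow s k)).encard := by
  obtain ⟨π₁, π₂, π₃, h₁, h₂, hne, h₃⟩ := h
  rintro k -
  induction k with
  | zero => simp
  | succ k ih =>
    obtain ⟨σ, hσ⟩ := NFA'.runs_wordPow_nonempty h₃ k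
    calc ((k + 1 : ℕ) : ℕ∞) ≤ (M.Runs q q' (wordPow s k)).encard + 1 := by push_cast; gcongr
      _ ≤ _ := NFA'.encard_runs_add_one_le h₁ h₂ hne hσ
end

section
/- Let A = (Q, Σ, Δ, q0, F) be an NFA, q ∈ Q a state, and s ∈ Σ* a string such that there exist two distinct runs of A from q to q both labeled by s. Then there exist a state p ∈ Q and strings s', s'' with s = s'·s'' such that: (i) there is a run of A from q to p labeled by s', (ii) there is a run of A from p to q labeled by s'', and (iii) there exist two distinct runs of A from p to p both labeled by s''·s' whose state sequences differ already at position 1, i.e., the states they reach after reading the first symbol of s''·s' are different. -/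
/-!
Let `i + 1` be the first position at which the two runs disagree (it is neither `0` nor `|s|`,
where both runs are at `q`), and let `p` be the common state at position `i`. Cutting `s` at `i`
and rotating each run so that it starts at position `i` gives two loops at `p` labeled by
`s'' · s'`, the second half of both being the first run's prefix. Their second states are the
states at position `i + 1` of the original runs, which differ.
-/

theorem exists_eq_and_succ_ne_of_ne {α : Type*} {f g : ℕ → α} {n k : ℕ}
    (h₀ : f 0 = g 0) (hn : f n = g n) (hk : k ≤ n) (hne : f k ≠ g k) :
    ∃ i, i + 1 < n ∧ f i = g i ∧ f (i + 1) ≠ g (i + 1) := by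
  induction k with
  | zero => exact absurd h₀ hne
  | succ m ih =>
    by_cases hm : f m = g m
    · exact ⟨m, lt_of_le_of_ne hk fun h => hne (h ▸ hn), hm, hne⟩
    · exact ih (by omega) hm

theorem Fin.exists_eq_comp_val {α : Type*} {n : ℕ} (ρ : Fin (n + 1) → α) :
    ∃ f : ℕ → α, ρ = fun k : Fin (n + 1) => f k :=
  ⟨fun m => ρ (Fin.ofNat (n + 1) m), funext fun k => by simp only [Fin.ofNat_val_eq_self]⟩

namespace NFA'

variable {Q A : Type*} (M : NFA' Q A)

/-- A run from `p` to `r` labeled by `w`, as a state sequence indexed by `ℕ`; only its values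
at `0, …, |w|` matter. -/
def IsPath (w : List A) (p r : Q) (f : ℕ → Q) : Prop :=
  f 0 = p ∧ f w.length = r ∧ ∀ i (hi : i < w.length), f (i + 1) ∈ M.δ (f i) w[i]

variable {M}

theorem mem_runs_iff {w : List A} {p r : Q} {f : ℕ → Q} :
    (fun k : Fin (w.length + 1) => f k) ∈ M.Runs p r w ↔ M.IsPath w p r f := by
  simp [Runs, IsRunOn, IsPath, Fin.forall_iff]

namespace IsPath

variable {w u v : List A} {p r t : Q} {f g : ℕ → Q} {i : ℕ}

theorem take (hf : M.IsPath w p r f) (hi : i ≤ w.length) : M.IsPath (w.take i) p (f i) f := by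
  refine ⟨hf.1, by rw [List.length_take_of_le hi], fun k hk => ?_⟩
  rw [List.length_take] at hk
  rw [List.getElem_take]
  exact hf.2.2 k (by omega)

theorem drop (hf : M.IsPath w p r f) (hi : i ≤ w.length) :
    M.IsPath (w.drop i) (f i) r (fun n => f (i + n)) := by
  refine ⟨rfl, ?_, fun k hk => ?_⟩
  · show f (i + (w.drop i).length) = r
    rw [List.length_drop, Nat.add_sub_cancel' hi, hf.2.1]
  · rw [List.length_drop] at hk
    rw [List.getElem_drop]
    exact hf.2.2 (i + k) (by omega)

theorem append (hf : M.IsPath u p r f) (hg : M.IsPath v r t g) :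
    M.IsPath (u ++ v) p t (fun n => if n < u.length then f n else g (n - u.length)) := by
  refine ⟨?_, ?_, fun k hk => ?_⟩
  · show (if 0 < u.length then f 0 else g (0 - u.length)) = p
    split_ifs with hu
    · exact hf.1
    · have hfu := hf.2.1
      rw [show u.length = 0 by omega] at hfu ⊢
      exact hg.1.trans (hfu.symm.trans hf.1)
  · simp [hg.2.1]
  · dsimp only
    rw [List.length_append] at hk
    by_cases hku : k < u.length
    · rw [List.getElem_append_left hku, if_pos hku]
      by_cases hk1 : k + 1 < u.length
      · rw [if_pos hk1]
        exact hf.2.2 k hku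
      · rw [if_neg hk1, show k + 1 - u.length = 0 by omega, hg.1,
          ← hf.2.1, show u.length = k + 1 by omega]
        exact hf.2.2 k hku
    · rw [List.getElem_append_right (by omega), if_neg hku, if_neg (by omega),
        show k + 1 - u.length = k - u.length + 1 by omega]
      exact hg.2.2 _ (by omega)

end IsPath

end NFA'

open NFA'

/-- If there are two distinct runs of `M` from `q` to `q` both labeled by `s`, then there
are a state `p` and a splitting `s = s' · s''` such that `q` reaches `p` via `s'`, `p`
reaches `q` via `s''`, and there are two distinct runs from `p` to `p` labeled by
`s'' · s'` whose state sequences already differ at position `1`, i.e. the states reached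
after reading the first symbol are different. -/
theorem two_distinct_loops_rotate_to_distinct_first_step {Q A : Type*} (M : NFA' Q A)
    (q : Q) (s : List A)
    (h : ∃ ρ₁ ρ₂, ρ₁ ∈ M.Runs q q s ∧ ρ₂ ∈ M.Runs q q s ∧ ρ₁ ≠ ρ₂) :
    ∃ (p : Q) (s' s'' : List A), s = s' ++ s'' ∧
      (M.Runs q p s').Nonempty ∧ (M.Runs p q s'').Nonempty ∧
      ∃ ρ₁ ρ₂, ρ₁ ∈ M.Runs p p (s'' ++ s') ∧ ρ₂ ∈ M.Runs p p (s'' ++ s') ∧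
        ρ₁ ≠ ρ₂ ∧ ρ₁ 1 ≠ ρ₂ 1 := by
  obtain ⟨ρ₁, ρ₂, h₁, h₂, hne⟩ := h
  obtain ⟨f₁, rfl⟩ := Fin.exists_eq_comp_val ρ₁
  obtain ⟨f₂, rfl⟩ := Fin.exists_eq_comp_val ρ₂
  rw [mem_runs_iff] at h₁ h₂
  have hdiff : ∃ k ≤ s.length, f₁ k ≠ f₂ k := by
    by_contra! hall
    exact hne (funext fun k => hall k k.is_le)
  obtain ⟨k, hk, hdiff⟩ := hdiff
  obtain ⟨i, hi, heq, hsucc⟩ := exists_eq_and_succ_ne_of_ne (h₁.1.trans h₂.1.symm)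
    (h₁.2.1.trans h₂.2.1.symm) hk hdiff
  have his : i ≤ s.length := by omega
  have rotate : ∀ g, M.IsPath s q q g → g i = f₁ i →
      M.IsPath (s.drop i ++ s.take i) (f₁ i) (f₁ i) fun n =>
        if n < (s.drop i).length then g (i + n) else f₁ (n - (s.drop i).length) :=
    fun g hg hgi => by
      have hrot := (hg.drop his).append (h₁.take his)
      rwa [hgi] at hrot
  have hlt : 1 < (s.drop i).length := by rw [List.length_drop]; omega
  have hone : ((1 : Fin ((s.drop i ++ s.take i).length + 1)) : ℕ) = 1 := by
    rw [Fin.val_one', Nat.mod_eq_of_lt (by rw [List.length_append]; omega)]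
  refine ⟨f₁ i, s.take i, s.drop i, (List.take_append_drop i s).symm,
    ⟨_, mem_runs_iff.2 (h₁.take his)⟩, ⟨_, mem_runs_iff.2 (h₁.drop his)⟩,
    _, _, mem_runs_iff.2 (rotate f₁ h₁ rfl), mem_runs_iff.2 (rotate f₂ h₂ heq.symm), ?_, ?_⟩
  · exact fun he => hsucc (by simpa only [hone, if_pos hlt] using congrFun he 1)
  · simpa only [hone, if_pos hlt] using hsucc
end

section
/- Let A = (Q, Σ, Δ, q0, F) be an NFA with finite state set Q. Suppose there is NO state q ∈ Q such that simultaneously: (i) there is a run of A from q0 to q, (ii) there exist two distinct runs of A from q to q with the same label string, and (iii) there is a run of A from q to some non-accepting state. Then there exist constants c, d ∈ ℕ (depending only on A) such that for every string w ∈ Σ* and every non-accepting state q_r ∈ Q \ F, the number of distinct runs of A from q0 to q_r labeled by w is at most c·(|w|+1)^d. -/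
namespace NFA'

variable {Q A : Type*} {M : NFA' Q A} {w : List A}

def segment (ρ : Fin (w.length + 1) → Q) (a b : Fin (w.length + 1)) :
    Fin (((w.drop a).take (b - a)).length + 1) → Q :=
  fun k => ρ ⟨a + k, by
    have := k.isLt
    simp only [List.length_take, List.length_drop] at this
    omega⟩

lemma segment_mem_runs {ρ : Fin (w.length + 1) → Q} (hρ : M.IsRunOn w ρ)
    {a b : Fin (w.length + 1)} (hab : a ≤ b) :
    segment ρ a b ∈ M.Runs (ρ a) (ρ b) ((w.drop a).take (b - a)) := by
  have hlen : ((w.drop a).take (b - a)).length = b - a := by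
    simp only [List.length_take, List.length_drop]; omega
  refine ⟨congrArg ρ (Fin.ext (by simp)), congrArg ρ (Fin.ext (by simp [hlen]; omega)), ?_⟩
  intro i
  have hi : a + i.val < w.length := by have := i.isLt; omega
  have hget : ((w.drop a).take (b - a)).get i = w.get ⟨a + i, hi⟩ := by
    simp [List.getElem_take, List.getElem_drop]
  rw [hget]
  convert hρ ⟨a + i, hi⟩ using 2 <;> simp [segment, Fin.succ, Fin.castSucc, Nat.add_assoc]

lemma exists_runs_to_of_isRunOn {ρ : Fin (w.length + 1) → Q} (hρ : M.IsRunOn w ρ)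
    (i : Fin (w.length + 1)) : ∃ u : List A, (M.Runs (ρ 0) (ρ i) u).Nonempty :=
  ⟨_, _, segment_mem_runs hρ (Fin.zero_le i)⟩

lemma exists_runs_from_of_isRunOn {ρ : Fin (w.length + 1) → Q} (hρ : M.IsRunOn w ρ)
    (i : Fin (w.length + 1)) : ∃ v : List A, (M.Runs (ρ i) (ρ (Fin.last _)) v).Nonempty :=
  ⟨_, _, segment_mem_runs hρ (Fin.le_last i)⟩

def HasUniqueLoopsAt (M : NFA' Q A) (q : Q) : Prop :=
  ∀ (s : List A) (τ₁ τ₂ : Fin (s.length + 1) → Q),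
    τ₁ ∈ M.Runs q q s → τ₂ ∈ M.Runs q q s → τ₁ = τ₂

lemma apply_eq_of_between {ρ σ : Fin (w.length + 1) → Q} (hρ : M.IsRunOn w ρ)
    (hσ : M.IsRunOn w σ) {q : Q} (hq : M.HasUniqueLoopsAt q) {a i b : Fin (w.length + 1)}
    (hai : a ≤ i) (hib : i ≤ b) (hρa : ρ a = q) (hσa : σ a = q) (hρb : ρ b = q)
    (hσb : σ b = q) : ρ i = σ i := by
  have hab := hai.trans hib
  have hρloop := segment_mem_runs hρ hab
  have hσloop := segment_mem_runs hσ hab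
  rw [hρa, hρb] at hρloop
  rw [hσa, hσb] at hσloop
  have hk : (i : ℕ) - a < ((w.drop a).take (b - a)).length + 1 := by
    simp only [List.length_take, List.length_drop]; omega
  have hi : i = ⟨a + ((i : ℕ) - a), by omega⟩ := Fin.ext (by simp; omega)
  rw [hi]
  exact congrFun (hq _ _ _ hρloop hσloop) ⟨(i : ℕ) - a, hk⟩

section FirstLast

variable [DecidableEq Q] {n : ℕ}

def firstLast (ρ : Fin (n + 1) → Q) (q : Q) : WithTop (Fin (n + 1)) × WithBot (Fin (n + 1)) :=
  ((Finset.univ.filter (ρ · = q)).min, (Finset.univ.filter (ρ · = q)).max)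

lemma firstLast_injOn :
    Set.InjOn firstLast
      {ρ : Fin (w.length + 1) → Q | M.IsRunOn w ρ ∧ ∀ i, M.HasUniqueLoopsAt (ρ i)} := by
  rintro ρ ⟨hρ, hloops⟩ σ ⟨hσ, -⟩ hfl
  funext i
  have hfl_i := congrFun hfl (ρ i)
  simp only [firstLast, Prod.mk.injEq] at hfl_i
  obtain ⟨hmin, hmax⟩ := hfl_i
  have hi : i ∈ Finset.univ.filter (ρ · = ρ i) := by simp
  obtain ⟨a, ha⟩ := WithTop.ne_top_iff_exists.mp
    (ne_top_of_le_ne_top WithTop.coe_ne_top (Finset.min_le hi))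
  obtain ⟨b, hb⟩ := WithBot.ne_bot_iff_exists.mp
    (ne_bot_of_le_ne_bot WithBot.coe_ne_bot (Finset.le_max hi))
  have hρa := Finset.mem_of_min ha.symm
  have hρb := Finset.mem_of_max hb.symm
  have hσa := Finset.mem_of_min (hmin.symm.trans ha.symm)
  have hσb := Finset.mem_of_max (hmax.symm.trans hb.symm)
  simp only [Finset.mem_filter, Finset.mem_univ, true_and] at hρa hρb hσa hσb
  refine apply_eq_of_between hρ hσ (hloops i) ?_ ?_ hρa hσa hρb hσb
  · exact WithTop.coe_le_coe.mp (ha ▸ Finset.min_le hi)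
  · exact WithBot.coe_le_coe.mp (hb ▸ Finset.le_max hi)

lemma card_firstLast_codomain :
    Nat.card (WithTop (Fin (n + 1)) × WithBot (Fin (n + 1))) = (n + 2) ^ 2 := by
  show Nat.card (Option _ × Option _) = _
  simp [sq]

end FirstLast

def IsPivot (M : NFA' Q A) (q : Q) : Prop :=
  (∃ w : List A, (M.Runs M.q0 q w).Nonempty) ∧
    (∃ (s : List A) (ρ₁ ρ₂ : Fin (s.length + 1) → Q),
      ρ₁ ∈ M.Runs q q s ∧ ρ₂ ∈ M.Runs q q s ∧ ρ₁ ≠ ρ₂) ∧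
    (∃ qr : Q, qr ∉ M.F ∧ ∃ v : List A, (M.Runs q qr v).Nonempty)

lemma hasUniqueLoopsAt_of_mem_runs (hM : ∀ q, ¬ M.IsPivot q) {qr : Q} (hqr : qr ∉ M.F)
    {ρ : Fin (w.length + 1) → Q} (hρ : ρ ∈ M.Runs M.q0 qr w) (i : Fin (w.length + 1)) :
    M.HasUniqueLoopsAt (ρ i) := by
  obtain ⟨hρ0, hρlast, hρrun⟩ := hρ
  intro s τ₁ τ₂ hτ₁ hτ₂
  by_contra hne
  refine hM (ρ i) ⟨?_, ⟨s, τ₁, τ₂, hτ₁, hτ₂, hne⟩, qr, hqr, ?_⟩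
  · simpa only [hρ0] using exists_runs_to_of_isRunOn hρrun i
  · simpa only [hρlast] using exists_runs_from_of_isRunOn hρrun i

lemma encard_runs_le_of_forall_not_isPivot [Finite Q] (hM : ∀ q, ¬ M.IsPivot q) {qr : Q}
    (hqr : qr ∉ M.F) :
    (M.Runs M.q0 qr w).encard ≤ (((w.length + 2) ^ 2) ^ Nat.card Q : ℕ) := by
  classical
  have hinj : Set.InjOn firstLast (M.Runs M.q0 qr w) :=
    firstLast_injOn.mono fun _ hρ =>
      Set.mem_ofPred.mpr ⟨hρ.2.2, hasUniqueLoopsAt_of_mem_runs hM hqr hρ⟩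
  rw [← hinj.encard_image]
  refine Set.encard_le_card.trans_eq ?_
  rw [ENat.card_eq_coe_natCard, Nat.card_fun, card_firstLast_codomain]

end NFA'

/-- If a finite-state NFA has no pivot state `q` that is reachable from `q0`, carries two
distinct equal-labeled loops, and can reach a non-accepting state, then the number of
runs from `q0` to any non-accepting state labeled by `w` is polynomially bounded in
the length of `w`. -/
theorem polynomial_runs_of_not_hyperVulnerable {Q A : Type*} [Finite Q] (M : NFA' Q A)
    (h : ¬ ∃ q : Q,
      (∃ w : List A, (M.Runs M.q0 q w).Nonempty) ∧
      (∃ (s : List A) (ρ₁ ρ₂ : Fin (s.length + 1) → Q),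
        ρ₁ ∈ M.Runs q q s ∧ ρ₂ ∈ M.Runs q q s ∧ ρ₁ ≠ ρ₂) ∧
      (∃ qr : Q, qr ∉ M.F ∧ ∃ v : List A, (M.Runs q qr v).Nonempty)) :
    ∃ c d : ℕ, ∀ (w : List A) (qr : Q), qr ∉ M.F →
      (M.Runs M.q0 qr w).encard ≤ ((c * (w.length + 1) ^ d : ℕ) : ℕ∞) := by
  refine ⟨4 ^ Nat.card Q, 2 * Nat.card Q, fun w qr hqr => ?_⟩
  refine (NFA'.encard_runs_le_of_forall_not_isPivot (fun q hq => h ⟨q, hq⟩) hqr).trans ?_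
  rw [Nat.cast_le, pow_mul, ← mul_pow]
  gcongr
  calc (w.length + 2) ^ 2 ≤ (2 * (w.length + 1)) ^ 2 := by gcongr; omega
    _ = 4 * (w.length + 1) ^ 2 := by ring
end

section
/- Let A = (Q, Σ, Δ, q0, F) be an NFA with finite state set Q. Suppose there are NO states q, q' ∈ Q and string s ∈ Σ* such that simultaneously: (i) there is a run π1 of A from q to q labeled by s, a run π2 of A from q to q' labeled by s with π1 ≠ π2, and a run π3 of A from q' to q' labeled by s, (ii) there is a run of A from q0 to q, and (iii) there is a run of A from q' to some non-accepting state. Then there exists a constant C ∈ ℕ (depending only on A) such that for every string w ∈ Σ* and every non-accepting state q_r ∈ Q \ F, the number of distinct runs of A from q0 to q_r labeled by w is at most C. -/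
/-!
A step of a run from `p` *leaves* the strongly connected component of `p` when its target can no
longer reach `p`. Two runs with the same endpoints that stay in that component coincide: closing
them up with a way back gives two loops at `p` with the same label, a two-loop pattern with
`q = q'`. So a run from `p` is determined by where it first leaves, through which transition,
and by the rest of the run, which starts at a state reaching strictly fewer states; induction on
that number bounds the runs, once the number of possible first exit positions is bounded. That
bound comes from Ramsey's theorem for pairs: colour two exit positions `a < b` by the states
that the run leaving at `b` occupies at `a` and the run leaving at `a` occupies at `b`; a
monochromatic set of five positions yields a two-loop pattern with `q ≠ q'`.
-/

namespace Finset

variable {α κ : Type*} [LinearOrder α] [Fintype κ] (f : α → α → κ)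

/-- The first half of the usual proof of Ramsey's theorem for pairs. -/
lemma exists_subset_color_eq_of_lt (t : ℕ) (s : Finset α)
    (hs : (Fintype.card κ + 1) ^ t ≤ s.card) :
    ∃ T ⊆ s, T.card = t ∧
      ∀ a ∈ T, ∀ b ∈ T, ∀ b' ∈ T, a < b → a < b' → f a b = f a b' := by
  classical
  induction t generalizing s with
  | zero => exact ⟨∅, empty_subset _, rfl, by simp⟩
  | succ t ih =>
    have hne : s.Nonempty := card_pos.1 (lt_of_lt_of_le (Nat.one_le_pow _ _ (by omega)) hs)
    set v := s.min' hne
    have hcard : (univ : Finset κ).card * (Fintype.card κ + 1) ^ t ≤ (s.erase v).card := by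
      rw [card_erase_of_mem (s.min'_mem hne), card_univ]
      have hpos := Nat.one_le_pow t (Fintype.card κ + 1) (Nat.succ_pos _)
      rw [pow_succ, mul_add_one, mul_comm] at hs
      omega
    obtain ⟨c, -, hc⟩ := exists_le_card_fiber_of_mul_le_card_of_maps_to
      (f := f v) (fun _ _ => mem_univ _) ⟨f v v, mem_univ _⟩ hcard
    obtain ⟨T, hTs, hTcard, hT⟩ := ih _ hc
    have hvT : v ∉ T := fun h => by simpa using (mem_filter.1 (hTs h)).1
    have hgt : ∀ b ∈ T, v < b ∧ f v b = c := fun b hb => by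
      obtain ⟨hb, hbc⟩ := mem_filter.1 (hTs hb)
      exact ⟨lt_of_le_of_ne (s.min'_le b (mem_of_mem_erase hb)) (ne_of_mem_erase hb).symm, hbc⟩
    refine ⟨insert v T, insert_subset (s.min'_mem hne)
      (hTs.trans ((filter_subset _ _).trans (erase_subset _ _))),
      by rw [card_insert_of_notMem hvT, hTcard], ?_⟩
    intro a ha b hb b' hb' hab hab'
    have hva : v ≤ a := by
      rcases mem_insert.1 ha with rfl | ha
      exacts [le_rfl, (hgt a ha).1.le]
    have hT' : ∀ x ∈ insert v T, a < x → x ∈ T := fun x hx hax =>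
      (mem_insert.1 hx).resolve_left (by rintro rfl; exact absurd hax (not_lt.2 hva))
    rcases mem_insert.1 ha with rfl | ha
    · exact (hgt b (hT' b hb hab)).2.trans (hgt b' (hT' b' hb' hab')).2.symm
    · exact hT a ha b (hT' b hb hab) b' (hT' b' hb' hab') hab hab'

lemma exists_monochromatic_subset (m : ℕ) (s : Finset α)
    (hs : (Fintype.card κ + 1) ^ (m * Fintype.card κ + 2) ≤ s.card) :
    ∃ U ⊆ s, U.card = m + 1 ∧ ∃ c, ∀ a ∈ U, ∀ b ∈ U, a < b → f a b = c := by
  classical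
  obtain ⟨T, hTs, hTcard, hT⟩ := exists_subset_color_eq_of_lt f _ s hs
  have hne : T.Nonempty := card_pos.1 (by omega)
  set z := T.max' hne
  have hcard : (univ : Finset κ).card * m < (T.erase z).card := by
    rw [card_erase_of_mem (T.max'_mem hne), card_univ, hTcard, mul_comm]
    omega
  obtain ⟨c, -, hc⟩ := exists_lt_card_fiber_of_mul_lt_card_of_maps_to
    (f := fun a => f a z) (fun _ _ => mem_univ _) hcard
  obtain ⟨U, hUs, hUcard⟩ := exists_subset_card_eq (show m + 1 ≤ _ from hc)
  have hU : ∀ a ∈ U, a ∈ T ∧ a < z ∧ f a z = c := fun a ha => by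
    obtain ⟨ha, hac⟩ := mem_filter.1 (hUs ha)
    exact ⟨mem_of_mem_erase ha, lt_of_le_of_ne (T.le_max' a (mem_of_mem_erase ha))
      (ne_of_mem_erase ha), hac⟩
  refine ⟨U, fun a ha => hTs (hU a ha).1, hUcard, c, fun a ha b hb hab => ?_⟩
  obtain ⟨haT, -, hac⟩ := hU a ha
  rw [← hac]
  exact hT a haT b (hU b hb).1 z (T.max'_mem hne) hab (hab.trans (hU b hb).2.1)

end Finset

namespace NFA'

variable {Q A : Type*} (M : NFA' Q A)

/-- `Runs` with state sequences indexed by `ℕ`, which avoids casts between `Fin` types when runs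
are cut and glued; positions after `w.length` are ignored. -/
def IsRun (p r : Q) (w : List A) (f : ℕ → Q) : Prop :=
  f 0 = p ∧ f w.length = r ∧ ∀ i (hi : i < w.length), f (i + 1) ∈ M.δ (f i) w[i]

def Reaches (p r : Q) : Prop :=
  ∃ (w : List A) (f : ℕ → Q), M.IsRun p r w f

def IsVulnerable : Prop :=
  ∃ (q q' : Q) (s : List A) (π₁ π₂ π₃ : Fin (s.length + 1) → Q),
    π₁ ∈ M.Runs q q s ∧ π₂ ∈ M.Runs q q' s ∧ π₁ ≠ π₂ ∧ π₃ ∈ M.Runs q' q' s ∧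
    (∃ w : List A, (M.Runs M.q0 q w).Nonempty) ∧
    (∃ qr : Q, qr ∉ M.F ∧ ∃ v : List A, (M.Runs q' qr v).Nonempty)

/-- `f` is in the strongly connected component of `p` up to position `a` and leaves it right
after. -/
def LeavesAt (p : Q) (f : ℕ → Q) (a : ℕ) : Prop :=
  (∀ i ≤ a, M.Reaches (f i) p) ∧ ¬ M.Reaches (f (a + 1)) p

variable {M}

def toSeq {m : ℕ} (ρ : Fin (m + 1) → Q) : ℕ → Q := fun i => ρ (Fin.clamp i m)

lemma toSeq_of_le {m : ℕ} (ρ : Fin (m + 1) → Q) {i : ℕ} (hi : i ≤ m) :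
    toSeq ρ i = ρ ⟨i, Nat.lt_succ_of_le hi⟩ := by
  simp [toSeq, Fin.clamp, Nat.min_eq_left hi]

lemma isRun_toSeq {p r : Q} {w : List A} {ρ : Fin (w.length + 1) → Q} (hρ : ρ ∈ M.Runs p r w) :
    M.IsRun p r w (toSeq ρ) := by
  obtain ⟨h0, hlast, hstep⟩ := hρ
  refine ⟨by simpa [toSeq_of_le] using h0, by simpa [toSeq_of_le, Fin.last] using hlast,
    fun i hi => ?_⟩
  rw [toSeq_of_le ρ hi, toSeq_of_le ρ hi.le]
  simpa using hstep ⟨i, hi⟩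

namespace IsRun

variable {p q r : Q} {u v w : List A} {f g : ℕ → Q}

lemma mem_runs (hf : M.IsRun p r w f) : (fun i : Fin (w.length + 1) => f i) ∈ M.Runs p r w :=
  ⟨hf.1, hf.2.1, fun i => by simpa using hf.2.2 i i.isLt⟩

lemma take (hf : M.IsRun p r w f) {j : ℕ} (hj : j ≤ w.length) : M.IsRun p (f j) (w.take j) f :=
  ⟨hf.1, by simp [hj], fun i hi => by simpa using hf.2.2 i (by simp at hi; omega)⟩

lemma drop (hf : M.IsRun p r w f) {i : ℕ} (hi : i ≤ w.length) :
    M.IsRun (f i) r (w.drop i) (fun t => f (i + t)) :=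
  ⟨rfl, by simpa [Nat.add_sub_cancel' hi] using hf.2.1,
    fun t ht => by simpa [Nat.add_assoc] using hf.2.2 (i + t) (by simp at ht; omega)⟩

lemma slice (hf : M.IsRun p r w f) {i j : ℕ} (hij : i ≤ j) (hj : j ≤ w.length) :
    M.IsRun (f i) (f j) ((w.drop i).take (j - i)) (fun t => f (i + t)) := by
  simpa [Nat.add_sub_cancel' hij] using (hf.drop (hij.trans hj)).take (j := j - i) (by simp; omega)

lemma append (hf : M.IsRun p q u f) (hg : M.IsRun q r v g) :
    M.IsRun p r (u ++ v) (fun t => if t ≤ u.length then f t else g (t - u.length)) := by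
  refine ⟨by simpa using hf.1, ?_, fun i hi => ?_⟩
  · simp only [List.length_append]
    split_ifs with h
    · have hv : v.length = 0 := by omega
      rw [hv, add_zero, hf.2.1, ← hg.1, ← hg.2.1, hv]
    · simpa using hg.2.1
  rw [List.length_append] at hi
  dsimp only
  rcases Nat.lt_or_ge i u.length with hiu | hiu
  · rw [List.getElem_append_left hiu, if_pos hiu.le, if_pos (Nat.succ_le_of_lt hiu)]
    exact hf.2.2 i hiu
  · rw [List.getElem_append_right hiu, if_neg (show ¬ i + 1 ≤ u.length by omega),
      show i + 1 - u.length = i - u.length + 1 by omega]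
    have := hg.2.2 (i - u.length) (by omega)
    split_ifs with h
    · obtain rfl : i = u.length := by omega
      simpa [hf.2.1, ← hg.1] using this
    · exact this

lemma reaches (hf : M.IsRun p r w f) : M.Reaches p r := ⟨w, f, hf⟩

lemma reaches_of_le (hf : M.IsRun p r w f) {i j : ℕ} (hij : i ≤ j) (hj : j ≤ w.length) :
    M.Reaches (f i) (f j) :=
  (hf.slice hij hj).reaches

end IsRun

namespace Reaches

variable {p q r : Q}

@[refl]
lemma refl (p : Q) : M.Reaches p p := ⟨[], fun _ => p, rfl, rfl, by simp⟩

lemma trans (hpq : M.Reaches p q) (hqr : M.Reaches q r) : M.Reaches p r := by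
  obtain ⟨u, f, hf⟩ := hpq
  obtain ⟨v, g, hg⟩ := hqr
  exact (hf.append hg).reaches

lemma exists_runs (h : M.Reaches p r) : ∃ w, (M.Runs p r w).Nonempty := by
  obtain ⟨w, f, hf⟩ := h
  exact ⟨w, _, hf.mem_runs⟩

end Reaches

lemma isVulnerable_of_isRun {q q' qr : Q} {s : List A} {f₁ f₂ f₃ : ℕ → Q}
    (h₁ : M.IsRun q q s f₁) (h₂ : M.IsRun q q' s f₂) (h₃ : M.IsRun q' q' s f₃)
    {t : ℕ} (ht : t ≤ s.length) (hne : f₁ t ≠ f₂ t)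
    (hacc : M.Reaches M.q0 q) (hco : M.Reaches q' qr) (hqr : qr ∉ M.F) : M.IsVulnerable := by
  refine ⟨q, q', s, _, _, _, h₁.mem_runs, h₂.mem_runs, fun h => hne ?_, h₃.mem_runs,
    hacc.exists_runs, qr, hqr, hco.exists_runs⟩
  simpa using congrFun h ⟨t, Nat.lt_succ_of_le ht⟩

/-- Appending a way back from `r` to `p` turns `f` and `g` into two loops at `p` with the same
label, a two-loop pattern with `q = q'` whose third run is the second loop again. -/
lemma IsRun.eq_of_reaches (hM : ¬ M.IsVulnerable) {p r qr : Q} {v : List A} {f g : ℕ → Q}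
    (hacc : M.Reaches M.q0 p) (hco : M.Reaches p qr) (hqr : qr ∉ M.F)
    (hf : M.IsRun p r v f) (hg : M.IsRun p r v g) (hrp : M.Reaches r p)
    {t : ℕ} (ht : t ≤ v.length) : f t = g t := by
  by_contra hne
  obtain ⟨u, k, hk⟩ := hrp
  have hf' := hf.append hk
  have hg' := hg.append hk
  exact hM <| isVulnerable_of_isRun hf' hg' hg' (t := t) (by simp; omega)
    (by simpa [ht] using hne) hacc hco hqr

lemma runs_subsingleton (hM : ¬ M.IsVulnerable) {p qr : Q} {w : List A}
    (hacc : M.Reaches M.q0 p) (hqr : qr ∉ M.F) (hqp : M.Reaches qr p) :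
    (M.Runs p qr w).Subsingleton := by
  intro ρ hρ σ hσ
  have hf := isRun_toSeq hρ
  funext i
  simpa [toSeq_of_le _ (Nat.le_of_lt_succ i.isLt)] using
    hf.eq_of_reaches hM hacc hf.reaches hqr (isRun_toSeq hσ) hqp (Nat.le_of_lt_succ i.isLt)

lemma IsRun.exists_leavesAt {p r : Q} {w : List A} {f : ℕ → Q} (hf : M.IsRun p r w f)
    (hrp : ¬ M.Reaches r p) : ∃ a < w.length, M.LeavesAt p f a := by
  classical
  have hlen : w.length ≠ 0 := fun h => hrp (by rw [← hf.2.1, h, hf.1])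
  have hex : ∃ a, a < w.length ∧ ¬ M.Reaches (f (a + 1)) p :=
    ⟨w.length - 1, by omega, by rwa [Nat.sub_add_cancel (Nat.pos_of_ne_zero hlen), hf.2.1]⟩
  obtain ⟨ha, hleave⟩ := Nat.find_spec hex
  refine ⟨Nat.find hex, ha, fun i hi => ?_, hleave⟩
  rcases i with _ | j
  · rw [hf.1]
  · exact not_not.1 fun h => Nat.find_min hex (show j < Nat.find hex by omega) ⟨by omega, h⟩

lemma LeavesAt.not_reaches {p r : Q} {w : List A} {f : ℕ → Q} {a j : ℕ}
    (ha : M.LeavesAt p f a) (hf : M.IsRun p r w f) (haj : a < j) (hj : j ≤ w.length) :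
    ¬ M.Reaches (f j) p :=
  fun h => ha.2 ((hf.reaches_of_le haj hj).trans h)

/-- Among runs leaving the component of `p` at many different positions, Ramsey's theorem finds
`a₀ < ⋯ < a₄` such that the run leaving at `a₄` is at one state `x` at `a₁` and `a₃`, the run
leaving at `a₂` goes from `x` to a state `y` between them, and the run leaving at `a₀` stays at
`y`. Since `x` lies in the component of `p` and `y` does not, this is a two-loop pattern. -/
lemma card_lt_of_forall_leavesAt [Fintype Q] (hM : ¬ M.IsVulnerable) {p qr : Q} {w : List A}
    (hacc : M.Reaches M.q0 p) (hqr : qr ∉ M.F) (s : Finset ℕ)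
    (hs : ∀ a ∈ s, ∃ f, M.IsRun p qr w f ∧ a < w.length ∧ M.LeavesAt p f a) :
    s.card < (Fintype.card (Q × Q) + 1) ^ (4 * Fintype.card (Q × Q) + 2) := by
  by_contra! hcard
  have : Nonempty Q := ⟨p⟩
  choose! G hG using hs
  obtain ⟨U, hUs, hUcard, ⟨x, y⟩, hU⟩ :=
    Finset.exists_monochromatic_subset (fun a b => (G b a, G a b)) 4 s hcard
  set u := U.orderEmbOfFin hUcard
  have hu : ∀ i j, i < j → G (u j) (u i) = x ∧ G (u i) (u j) = y := fun i j hij =>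
    Prod.ext_iff.1 (hU _ (U.orderEmbOfFin_mem hUcard i) _ (U.orderEmbOfFin_mem hUcard j)
      (u.strictMono hij))
  have hG' : ∀ i, M.IsRun p qr w (G (u i)) ∧ u i < w.length ∧ M.LeavesAt p (G (u i)) (u i) :=
    fun i => hG _ (hUs (U.orderEmbOfFin_mem hUcard i))
  have h13 : u 1 ≤ u 3 := u.monotone (by decide)
  have h3 : u 3 ≤ w.length := (hG' 3).2.1.le
  have h₁ := (hG' 4).1.slice h13 h3
  rw [(hu 1 4 (by decide)).1, (hu 3 4 (by decide)).1] at h₁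
  have h₂ := (hG' 2).1.slice h13 h3
  rw [(hu 1 2 (by decide)).1, (hu 2 3 (by decide)).2] at h₂
  have h₃ := (hG' 0).1.slice h13 h3
  rw [(hu 0 1 (by decide)).2, (hu 0 3 (by decide)).2] at h₃
  have hx : M.Reaches x p := (hu 1 4 (by decide)).1 ▸ (hG' 4).2.2.1 (u 1) (u.monotone (by decide))
  have hy : ¬ M.Reaches y p := (hu 0 1 (by decide)).2 ▸
    (hG' 0).2.2.not_reaches (hG' 0).1 (u.strictMono (by decide)) (h13.trans h3)
  have hpx := (hG' 4).1.take (h13.trans h3)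
  rw [(hu 1 4 (by decide)).1] at hpx
  have hyq := (hG' 0).1.drop h3
  rw [(hu 0 3 (by decide)).2] at hyq
  have hxy : x ≠ y := fun h => hy (h ▸ hx)
  exact hM <| isVulnerable_of_isRun h₁ h₂ h₃ le_rfl (h₁.2.1.trans_ne (hxy.trans_eq h₂.2.1.symm))
    (hacc.trans hpx.reaches) hyq.reaches hqr

variable (M) in
def leavingRuns (p qr : Q) (w : List A) (a : ℕ) (p₁ p₂ : Q) : Set (Fin (w.length + 1) → Q) :=
  {ρ ∈ M.Runs p qr w | a < w.length ∧ M.LeavesAt p (toSeq ρ) a ∧ toSeq ρ a = p₁ ∧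
    toSeq ρ (a + 1) = p₂}

/-- A leaving run is determined by its part after the exit: the part before it is a run inside
the component of `p`, unique by `IsRun.eq_of_reaches`. -/
lemma encard_leavingRuns_le (hM : ¬ M.IsVulnerable) {p qr p₁ p₂ : Q} {w : List A} {a : ℕ}
    (hacc : M.Reaches M.q0 p) (hqr : qr ∉ M.F) :
    (M.leavingRuns p qr w a p₁ p₂).encard ≤ (M.Runs p₂ qr (w.drop (a + 1))).encard := by
  refine Set.encard_le_encard_of_injOn
    (f := fun ρ (t : Fin ((w.drop (a + 1)).length + 1)) => toSeq ρ (a + 1 + t)) ?_ ?_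
  · rintro ρ ⟨hρ, ha, -, -, h₂⟩
    simpa [h₂] using ((isRun_toSeq hρ).drop ha).mem_runs
  · rintro ρ ⟨hρ, ha, hleave, h₁, -⟩ σ ⟨hσ, -, -, h₁', -⟩ heq
    have hf := isRun_toSeq hρ
    have key : ∀ j ≤ w.length, toSeq ρ j = toSeq σ j := by
      intro j hj
      rcases le_or_gt j a with hja | hja
      · have hf' := hf.take ha.le
        have hg' := (isRun_toSeq hσ).take ha.le
        rw [h₁] at hf'
        rw [h₁'] at hg'
        exact hf'.eq_of_reaches hM hacc hf.reaches hqr hg' (h₁ ▸ hleave.1 a le_rfl)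
          (by simp; omega)
      · obtain ⟨t, rfl⟩ : ∃ t, j = a + 1 + t := ⟨j - (a + 1), by omega⟩
        simpa using congrFun heq ⟨t, by simp; omega⟩
    funext i
    simpa [toSeq_of_le _ (Nat.le_of_lt_succ i.isLt)] using key i (Nat.le_of_lt_succ i.isLt)

lemma ncard_setOf_reaches_lt [Finite Q] {p q : Q} (hpq : M.Reaches p q) (hqp : ¬ M.Reaches q p) :
    {r | M.Reaches q r}.ncard < {r | M.Reaches p r}.ncard :=
  Set.ncard_lt_ncard ⟨fun _ hr => hpq.trans hr, fun h => hqp (h (Reaches.refl p))⟩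

lemma encard_runs_le [Fintype Q] (hM : ¬ M.IsVulnerable) (k : ℕ) :
    ∀ p, {r | M.Reaches p r}.ncard ≤ k → M.Reaches M.q0 p → ∀ w qr, qr ∉ M.F →
      (M.Runs p qr w).encard ≤ (((Fintype.card (Q × Q) + 1) ^ (4 * Fintype.card (Q × Q) + 2) *
        Fintype.card (Q × Q) + 1) ^ k : ℕ) := by
  set R := (Fintype.card (Q × Q) + 1) ^ (4 * Fintype.card (Q × Q) + 2)
  induction k with
  | zero =>
    intro p hp
    exact absurd hp (not_le.2 ((Set.ncard_pos (Set.toFinite _)).2 ⟨p, Reaches.refl p⟩))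
  | succ k ih =>
    intro p hk hacc w qr hqr
    by_cases hqp : M.Reaches qr p
    · calc _ ≤ 1 := Set.encard_le_one_iff_subsingleton.2 (runs_subsingleton hM hacc hqr hqp)
        _ ≤ _ := by exact_mod_cast Nat.one_le_pow _ _ (Nat.succ_pos _)
    classical
    set E := (Finset.range w.length).filter
      (fun a => ∃ f, M.IsRun p qr w f ∧ a < w.length ∧ M.LeavesAt p f a)
    have hE : E.card < R :=
      card_lt_of_forall_leavesAt hM hacc hqr E (fun a ha => (Finset.mem_filter.1 ha).2)
    have hcover : M.Runs p qr w ⊆ ⋃ i : E × Q × Q, M.leavingRuns p qr w i.1 i.2.1 i.2.2 := by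
      intro ρ hρ
      obtain ⟨a, ha, hleave⟩ := (isRun_toSeq hρ).exists_leavesAt hqp
      exact Set.mem_iUnion.2 ⟨(⟨a, Finset.mem_filter.2 ⟨Finset.mem_range.2 ha, _,
        isRun_toSeq hρ, ha, hleave⟩⟩, toSeq ρ a, toSeq ρ (a + 1)), hρ, ha, hleave, rfl, rfl⟩
    have hfib : ∀ a p₁ p₂, (M.leavingRuns p qr w a p₁ p₂).encard ≤
        (((R * Fintype.card (Q × Q) + 1) ^ k : ℕ) : ℕ∞) := by
      intro a p₁ p₂
      rcases (M.leavingRuns p qr w a p₁ p₂).eq_empty_or_nonempty with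
        h | ⟨ρ, hρ, ha, hleave, -, rfl⟩
      · simp [h]
      have hreach := ((isRun_toSeq hρ).take (Nat.succ_le_of_lt ha)).reaches
      exact (encard_leavingRuns_le hM hacc hqr).trans (ih _
        (Nat.lt_succ_iff.1 ((ncard_setOf_reaches_lt hreach hleave.2).trans_le hk))
        (hacc.trans hreach) _ _ hqr)
    calc (M.Runs p qr w).encard
        ≤ (⋃ i : E × Q × Q, M.leavingRuns p qr w i.1 i.2.1 i.2.2).encard := Set.encard_mono hcover
      _ ≤ ∑ i : E × Q × Q, (M.leavingRuns p qr w i.1 i.2.1 i.2.2).encard :=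
        Set.encard_iUnion_le_of_fintype _
      _ ≤ ∑ _i : E × Q × Q, (((R * Fintype.card (Q × Q) + 1) ^ k : ℕ) : ℕ∞) :=
        Finset.sum_le_sum fun i _ => hfib _ _ _
      _ = ((E.card * Fintype.card (Q × Q) * (R * Fintype.card (Q × Q) + 1) ^ k : ℕ) : ℕ∞) := by
        simp [Fintype.card_prod, mul_assoc]
      _ ≤ (((R * Fintype.card (Q × Q) + 1) ^ (k + 1) : ℕ) : ℕ∞) := by
        rw [pow_succ']
        exact_mod_cast Nat.mul_le_mul_right _
          ((Nat.mul_le_mul_right _ hE.le).trans (Nat.le_succ _))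

end NFA'

/-- If a finite-state NFA has no pair of states `q`, `q'` with the two-loop pattern
(a loop `π₁` at `q`, a run `π₂` from `q` to `q'` with `π₁ ≠ π₂`, and a loop `π₃` at `q'`,
all with the same label `s`, where `q` is reachable from `q0` and `q'` can reach a
non-accepting state), then the number of runs from `q0` to any non-accepting state
labeled by any word is uniformly bounded by a constant. -/
theorem bounded_runs_of_not_vulnerable {Q A : Type*} [Finite Q] (M : NFA' Q A)
    (h : ¬ ∃ (q q' : Q) (s : List A) (π₁ π₂ π₃ : Fin (s.length + 1) → Q),
      π₁ ∈ M.Runs q q s ∧ π₂ ∈ M.Runs q q' s ∧ π₁ ≠ π₂ ∧ π₃ ∈ M.Runs q' q' s ∧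
      (∃ w : List A, (M.Runs M.q0 q w).Nonempty) ∧
      (∃ qr : Q, qr ∉ M.F ∧ ∃ v : List A, (M.Runs q' qr v).Nonempty)) :
    ∃ C : ℕ, ∀ (w : List A) (qr : Q), qr ∉ M.F →
      (M.Runs M.q0 qr w).encard ≤ (C : ℕ∞) := by
  have := Fintype.ofFinite Q
  exact ⟨_, fun w qr hqr => NFA'.encard_runs_le h _ M.q0 (Set.ncard_le_card _)
    (NFA'.Reaches.refl _) w qr hqr⟩
end
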